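/- The antipode S of a finite-dimensional Hopf algebra H over a field k is bijective. -/

import Mathlib

/-!
`H*` is a Hopf module over `H`: a right `H`-module through `(f ↼ h)(x) = f(x S(h))`, and a right
`H`-comodule `f ↦ ∑ f₀ ⊗ f₁` determined by `∑ f₀(x) f₁ = f ⇀ x = ∑ x₁ f(x₂)`, which exists because
`H* ⊗ H ≃ End H` in finite dimension. Its coinvariants are the left integrals of `H*`, and the
fundamental theorem of Hopf modules provides a projection `P f = ∑ f₀ ↼ S(f₁)` onto them with
`f = ∑ P(f₀) ↼ f₁`; hence a nonzero left integral `λ` exists. For such `λ`,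
`∑ P((λ ↼ h)₀) ⊗ (λ ↼ h)₁ = λ ⊗ h`, so `h ↦ λ ↼ h` is injective. As `λ ↼ h` only depends on
`S h`, the antipode is injective, hence bijective in finite dimension.
-/

universe u v

open TensorProduct WithConv
open Coalgebra (Repr comul counit sum_tmul_tmul_eq sum_counit_smul sum_tmul_counit_eq)
open scoped Coalgebra

lemma Coalgebra.sum_smul_counit {R A : Type*} [CommSemiring R] [AddCommMonoid A] [Module R A]
    [Coalgebra R A] {a : A} {ι : Type*} (r : Repr R a ι) :
    ∑ i ∈ r.index, counit (R := R) (r.right i) • r.left i = a := by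
  simpa only [map_sum, _root_.TensorProduct.rid_tmul, one_smul] using
    congr(_root_.TensorProduct.rid R A $(sum_tmul_counit_eq r))

lemma dualTensorHom_assoc_tmul {R M N P : Type*} [CommSemiring R] [AddCommMonoid M] [Module R M]
    [AddCommMonoid N] [Module R N] [AddCommMonoid P] [Module R P]
    (s : Module.Dual R M ⊗[R] N) (p : P) (x : M) :
    dualTensorHom R M (N ⊗[R] P) (TensorProduct.assoc R _ N P (s ⊗ₜ p)) x =
      dualTensorHom R M N s x ⊗ₜ p := by
  induction s with
  | zero => simp
  | tmul g n => simp [TensorProduct.smul_tmul']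
  | add s s' hs hs' => simp [TensorProduct.add_tmul, hs, hs']

namespace Coalgebra

variable {R C : Type*} [CommSemiring R] [AddCommMonoid C] [Module R C] [Coalgebra R C]

/-- The hit action `f ⇀ x = ∑ x₁ f(x₂)` of `C*` on `C`. -/
def hit : Module.Dual R C →ₗ[R] C →ₗ[R] C :=
  LinearMap.lcomp R C comul ∘ₗ
    LinearMap.llcomp R (C ⊗[R] C) (C ⊗[R] R) C (_root_.TensorProduct.rid R C).toLinearMap ∘ₗ
      LinearMap.lTensorHom C

lemma hit_eq_sum (f : Module.Dual R C) {x : C} {ι : Type*} (r : Repr R x ι) :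
    hit f x = ∑ i ∈ r.index, f (r.right i) • r.left i := by
  simp [hit, ← r.eq]

lemma counit_hit (f : Module.Dual R C) (x : C) : counit (R := R) (hit f x) = f x := by
  rw [hit_eq_sum f (ℛ R x), map_sum, ← f.congr_arg (sum_counit_smul (ℛ R x)), map_sum]
  simp [mul_comm]

lemma comul_hit (f : Module.Dual R C) (x : C) :
    comul (R := R) (hit f x) = (hit f).lTensor C (comul x) := by
  have h := congr(((_root_.TensorProduct.rid R C).toLinearMap ∘ₗ f.lTensor C).lTensor C
    $(sum_tmul_tmul_eq (ℛ R x) (fun i => ℛ R _) (fun i => ℛ R _)))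
  simp only [map_sum, LinearMap.lTensor_tmul, LinearMap.comp_apply, LinearEquiv.coe_coe,
    _root_.TensorProduct.rid_tmul, TensorProduct.tmul_smul] at h
  rw [hit_eq_sum f (ℛ R x), ← (ℛ R x).eq, map_sum, map_sum]
  simpa [hit_eq_sum f (ℛ R _), TensorProduct.tmul_sum, ← (ℛ R (Repr.left _ _)).eq,
    Finset.smul_sum] using h

end Coalgebra

namespace Bialgebra

open Coalgebra (hit)

variable {R H : Type*} [CommSemiring R] [Semiring H] [Bialgebra R H]

/-- Equivalently `g * l = g(1) l` for every `g ∈ H*` (convolution product): `l` is a left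
integral in `H*`. -/
def IsLeftIntegral (l : Module.Dual R H) : Prop := ∀ x, hit l x = l x • 1

end Bialgebra

namespace HopfAlgebra

open Coalgebra (hit hit_eq_sum counit_hit comul_hit)
open Bialgebra (IsLeftIntegral)

section Semiring

variable {R H : Type*} [CommSemiring R] [Semiring H] [HopfAlgebra R H]

lemma comul_mul_comm_map_antipode_comul :
    toConv (comul (R := R) (A := H)) *
      toConv ((TensorProduct.comm R H H).toLinearMap ∘ₗ map (antipode R) (antipode R) ∘ₗ comul) =
        1 := by
  set G : H →ₗ[R] H ⊗[R] H :=
    (TensorProduct.comm R H H).toLinearMap ∘ₗ map (antipode R) (antipode R) ∘ₗ comul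
  have hG (y : H) : G y =
      ∑ i ∈ (ℛ R y).index, antipode R ((ℛ R y).right i) ⊗ₜ antipode R ((ℛ R y).left i) := by
    simp [G, ← (ℛ R y).eq]
  have key (a b : H) : ∑ j ∈ (ℛ R b).index, (a ⊗ₜ[R] (ℛ R b).left j) * G ((ℛ R b).right j) =
      (a * antipode R b) ⊗ₜ 1 := by
    have h := congr(map (LinearMap.mulLeft R a ∘ₗ antipode R)
      (LinearMap.mul' R H ∘ₗ (antipode R).lTensor H)
      (TensorProduct.comm R (H ⊗[R] H) H ((TensorProduct.assoc R H H H).symm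
        $(sum_tmul_tmul_eq (ℛ R b) (fun i => ℛ R _) (fun i => ℛ R _)))))
    simp only [map_sum, TensorProduct.assoc_symm_tmul, TensorProduct.comm_tmul, map_tmul,
      LinearMap.comp_apply, LinearMap.lTensor_tmul, LinearMap.mul'_apply,
      LinearMap.mulLeft_apply] at h
    simp only [hG, Finset.mul_sum, Algebra.TensorProduct.tmul_mul_tmul, ← h,
      ← TensorProduct.tmul_sum, sum_mul_antipode_eq_algebraMap_counit]
    simp only [Algebra.algebraMap_eq_smul_one, TensorProduct.tmul_smul, TensorProduct.smul_tmul',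
      ← TensorProduct.sum_tmul, ← mul_smul_comm, ← Finset.mul_sum, ← map_smul, ← map_sum,
      sum_counit_smul]
  ext x
  rw [(ℛ R x).convMul_apply]
  have step₁ := congr(LinearMap.mul' R (H ⊗[R] H) ((TensorProduct.assoc R H H (H ⊗[R] H)).symm
      ((G.lTensor H).lTensor H $(sum_tmul_tmul_eq (ℛ R x) (fun i => ℛ R _) (fun i => ℛ R _)))))
  simp only [map_sum, LinearMap.lTensor_tmul, TensorProduct.assoc_symm_tmul, LinearMap.mul'_apply,
    ← Finset.sum_mul, (ℛ R _).eq] at step₁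
  rw [step₁]
  simp only [key, ← TensorProduct.sum_tmul, sum_mul_antipode_eq_algebraMap_counit]
  simp [Algebra.TensorProduct.one_def, Algebra.algebraMap_eq_smul_one, TensorProduct.smul_tmul']

lemma comul_antipode_mul_comul :
    toConv (comul (R := R) ∘ₗ antipode R) * toConv (comul (R := R) (A := H)) = 1 := by
  ext x
  simp [(ℛ R x).convMul_apply, ← Bialgebra.comul_mul, ← map_sum,
    sum_antipode_mul_eq_algebraMap_counit]

lemma comul_antipode (a : H) :
    comul (R := R) (antipode R a) =
      TensorProduct.comm R H H (map (antipode R) (antipode R) (comul a)) := by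
  have := left_inv_eq_right_inv (M := WithConv (H →ₗ[R] H ⊗[R] H))
    comul_antipode_mul_comul comul_mul_comm_map_antipode_comul
  exact congr($this a)

@[simps]
def _root_.Coalgebra.Repr.antipode {a : H} {ι : Type*} (r : Repr R a ι) :
    Repr R (HopfAlgebra.antipode R a) ι where
  index := r.index
  left i := HopfAlgebra.antipode R (r.right i)
  right i := HopfAlgebra.antipode R (r.left i)
  eq := by simp [comul_antipode, ← r.eq]

def dualAct : Module.Dual R H →ₗ[R] H →ₗ[R] Module.Dual R H :=
  (LinearMap.llcomp R H H R).compl₂ ((LinearMap.mul R H).flip ∘ₗ antipode R)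

@[simp] lemma dualAct_apply (f : Module.Dual R H) (h x : H) :
    dualAct f h x = f (x * antipode R h) := rfl

lemma dualAct_dualAct (f : Module.Dual R H) (a b : H) :
    dualAct (dualAct f a) b = dualAct f (a * b) := by
  ext x
  simp [antipode_mul_antidistrib, mul_assoc]

lemma dualAct_algebraMap (f : Module.Dual R H) (c : R) :
    dualAct f (algebraMap R H c) = c • f := by
  ext x
  simp [Algebra.algebraMap_eq_smul_one]

lemma hit_dualAct (f : Module.Dual R H) {h : H} {ι : Type*} (r : Repr R h ι) (x : H) :
    hit (dualAct f h) x = ∑ i ∈ r.index, hit f (x * antipode R (r.left i)) * r.right i := by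
  set Φ : H ⊗[R] (H ⊗[R] H) →ₗ[R] H := (TensorProduct.rid R H).toLinearMap ∘ₗ f.lTensor H ∘ₗ
    LinearMap.mulLeft R (comul x) ∘ₗ (TensorProduct.comm R H H).toLinearMap ∘ₗ
    map (antipode R) (LinearMap.mul' R H ∘ₗ (antipode R).rTensor H)
  have key := congr(Φ $(sum_tmul_tmul_eq r (fun i => ℛ R _) (fun i => ℛ R _)))
  simp only [Φ, map_sum, LinearMap.comp_apply, map_tmul, LinearMap.rTensor_tmul,
    LinearMap.mul'_apply, TensorProduct.comm_tmul, LinearMap.mulLeft_apply, ← (ℛ R x).eq,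
    Finset.sum_mul, Algebra.TensorProduct.tmul_mul_tmul, LinearMap.lTensor_tmul,
    LinearEquiv.coe_coe, TensorProduct.rid_tmul] at key
  simp only [hit_eq_sum _ ((ℛ R x).mul (ℛ R _).antipode), Finset.sum_mul, Repr.mul_index,
    Repr.mul_left, Repr.mul_right, Repr.antipode_left, Repr.antipode_right, Repr.antipode_index,
    Finset.sum_product, smul_mul_assoc, mul_assoc]
  rw [Finset.sum_congr rfl fun i _ => Finset.sum_comm, key, hit_eq_sum _ (ℛ R x)]
  simp only [Finset.sum_comm (t := (ℛ R x).index)]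
  refine Finset.sum_congr rfl fun p _ => ?_
  simp only [← Finset.smul_sum, ← Finset.mul_sum, sum_antipode_mul_eq_algebraMap_counit,
    Algebra.algebraMap_eq_smul_one, mul_smul_comm, mul_one, smul_smul, ← Finset.sum_smul]
  congr 1
  conv_lhs => rw [← Coalgebra.sum_smul_counit r]
  simp [map_sum, mul_comm]

section FiniteProjective

variable [Module.Finite R H] [Module.Projective R H]

/-- The right `H`-comodule structure on `H*` transported from `hit` along `H* ⊗ H ≃ End H`. -/
noncomputable def coaction : Module.Dual R H →ₗ[R] Module.Dual R H ⊗[R] H :=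
  (dualTensorHomEquiv R H H).symm.toLinearMap ∘ₗ hit

lemma dualTensorHom_coaction (f : Module.Dual R H) :
    dualTensorHom R H H (coaction f) = hit f :=
  (dualTensorHomEquiv R H H).apply_symm_apply (hit f)

lemma rid_lTensor_counit_coaction (f : Module.Dual R H) :
    TensorProduct.rid R _ (counit.lTensor _ (coaction f)) = f := by
  rw [← LinearEquiv.coe_toLinearMap, ← dualTensorHom_self_right, ← LinearMap.comp_apply,
    dualTensorHom_comp_lTensor]
  ext x
  simp [dualTensorHom_coaction, counit_hit]

lemma dualTensorHom_assoc_rTensor_coaction (t : Module.Dual R H ⊗[R] H) :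
    dualTensorHom R H (H ⊗[R] H) (TensorProduct.assoc R _ H H (coaction.rTensor H t)) =
      (dualTensorHom R H H t).lTensor H ∘ₗ comul := by
  induction t with
  | zero => ext; simp
  | tmul g y =>
    ext x
    simp only [LinearMap.rTensor_tmul, LinearMap.comp_apply, dualTensorHom_assoc_tmul,
      dualTensorHom_coaction, hit_eq_sum g (ℛ R x), ← (ℛ R x).eq]
    simp only [map_sum, LinearMap.lTensor_tmul, dualTensorHom_apply, TensorProduct.sum_tmul,
      TensorProduct.smul_tmul]
  | add s s' hs hs' => simp [hs, hs', LinearMap.lTensor_add, LinearMap.add_comp]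

lemma assoc_rTensor_coaction_coaction (f : Module.Dual R H) :
    TensorProduct.assoc R _ H H (coaction.rTensor H (coaction f)) =
      comul.lTensor _ (coaction f) := by
  apply (dualTensorHom_bijective (R := R) (M := H) (N := H ⊗[R] H)).1
  rw [dualTensorHom_assoc_rTensor_coaction, dualTensorHom_coaction,
    ← LinearMap.comp_apply (dualTensorHom R H (H ⊗[R] H)), dualTensorHom_comp_lTensor]
  ext x
  simp [dualTensorHom_coaction, comul_hit]

/-- `f ↦ ∑ f₀ ↼ S(f₁)`, the projection of `H*` onto its left integrals. -/
noncomputable def integralProj : Module.Dual R H →ₗ[R] Module.Dual R H :=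
  TensorProduct.lift (dualAct.compl₂ (antipode R)) ∘ₗ coaction

lemma lift_dualAct_rTensor_integralProj_coaction (f : Module.Dual R H) :
    TensorProduct.lift dualAct (integralProj.rTensor H (coaction f)) = f := by
  set B := dualAct.compl₂ (LinearMap.mul' R H ∘ₗ (antipode R).rTensor H)
  have hB : TensorProduct.lift B ∘ₗ comul.lTensor _ =
      (TensorProduct.rid R _).toLinearMap ∘ₗ counit.lTensor _ := by
    ext g y
    simp [B, mul_antipode_rTensor_comul_apply, dualAct_algebraMap]
  have h (t : Module.Dual R H ⊗[R] H) : TensorProduct.lift dualAct (integralProj.rTensor H t) =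
      TensorProduct.lift B (TensorProduct.assoc R _ H H (coaction.rTensor H t)) := by
    induction t with
    | zero => simp
    | add s s' hs hs' => simp [hs, hs']
    | tmul g y =>
      simp only [LinearMap.rTensor_tmul, TensorProduct.lift.tmul, integralProj,
        LinearMap.comp_apply]
      induction coaction g with
      | zero => simp
      | add s s' hs hs' => simp [hs, hs', TensorProduct.add_tmul]
      | tmul g' u => simp [B, dualAct_dualAct]
  rw [h, assoc_rTensor_coaction_coaction, ← LinearMap.comp_apply (TensorProduct.lift B), hB,
    LinearMap.comp_apply, LinearEquiv.coe_coe, rid_lTensor_counit_coaction]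

lemma isLeftIntegral_integralProj (f : Module.Dual R H) : IsLeftIntegral (integralProj f) := by
  intro x
  -- `Ξ (g ⊗ u ⊗ v) = (g ⇀ x S²(v)) S(u)`
  set Ξ : Module.Dual R H ⊗[R] (H ⊗[R] H) →ₗ[R] H := LinearMap.mul' R H ∘ₗ
    map (TensorProduct.lift (hit.compl₂ (LinearMap.mulLeft R x ∘ₗ antipode R ∘ₗ antipode R)))
      (antipode R) ∘ₗ
    (TensorProduct.assoc R _ H H).symm.toLinearMap ∘ₗ
    (TensorProduct.comm R H H).toLinearMap.lTensor _
  have hC (t : Module.Dual R H ⊗[R] H) :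
      hit (TensorProduct.lift (dualAct.compl₂ (antipode R)) t) x = Ξ (comul.lTensor _ t) := by
    induction t with
    | zero => simp
    | add s s' hs hs' => simp [hs, hs']
    | tmul g y =>
      simp [Ξ, hit_dualAct g (ℛ R y).antipode, ← (ℛ R y).eq, TensorProduct.tmul_sum]
  have hD (t : Module.Dual R H ⊗[R] H) : Ξ (TensorProduct.assoc R _ H H (coaction.rTensor H t)) =
      TensorProduct.lift (dualAct.compl₂ (antipode R)) t x • 1 := by
    induction t with
    | zero => simp
    | add s s' hs hs' => simp [hs, hs', add_smul]
    | tmul g y =>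
      set z := x * antipode R (antipode R y)
      have (s : Module.Dual R H ⊗[R] H) : Ξ (TensorProduct.assoc R _ H H (s ⊗ₜ y)) =
          LinearMap.mul' R H ((antipode R).lTensor H ((dualTensorHom R H H s).lTensor H
            (comul z))) := by
        induction s with
        | zero => simp
        | add s s' hs hs' => simp [hs, hs', TensorProduct.add_tmul, LinearMap.lTensor_add]
        | tmul g' u =>
          simp [Ξ, z, hit_eq_sum g' (ℛ R z), ← (ℛ R z).eq, Finset.sum_mul]
      simp only [LinearMap.rTensor_tmul, this, dualTensorHom_coaction, ← comul_hit,
        mul_antipode_lTensor_comul_apply, counit_hit, Algebra.algebraMap_eq_smul_one]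
      simp [z]
  rw [integralProj, LinearMap.comp_apply, hC, ← assoc_rTensor_coaction_coaction, hD]

variable {l : Module.Dual R H}

lemma coaction_dualAct (hl : IsLeftIntegral l) (h : H) :
    coaction (dualAct l h) = (dualAct l).rTensor H (comul h) := by
  apply (dualTensorHom_bijective (R := R) (M := H) (N := H)).1
  ext x
  simp [dualTensorHom_coaction, hit_dualAct l (ℛ R h), hl _, ← (ℛ R h).eq]

lemma integralProj_dualAct (hl : IsLeftIntegral l) (h : H) :
    integralProj (dualAct l h) = counit (R := R) h • l := by
  simp only [integralProj, LinearMap.comp_apply, coaction_dualAct hl, ← (ℛ R h).eq, map_sum,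
    LinearMap.rTensor_tmul, TensorProduct.lift.tmul, LinearMap.compl₂_apply, dualAct_dualAct]
  rw [← map_sum, sum_mul_antipode_eq_algebraMap_counit, dualAct_algebraMap]

lemma rTensor_integralProj_coaction_dualAct (hl : IsLeftIntegral l) (h : H) :
    integralProj.rTensor H (coaction (dualAct l h)) = l ⊗ₜ h := by
  simp only [coaction_dualAct hl, ← (ℛ R h).eq, map_sum, LinearMap.rTensor_tmul,
    integralProj_dualAct hl, TensorProduct.smul_tmul, ← TensorProduct.tmul_sum, sum_counit_smul]

lemma exists_isLeftIntegral_ne_zero [Nontrivial R] :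
    ∃ l : Module.Dual R H, IsLeftIntegral l ∧ l ≠ 0 := by
  by_contra! h
  have hP : integralProj (R := R) (H := H) = 0 :=
    LinearMap.ext fun f => h _ (isLeftIntegral_integralProj f)
  have := lift_dualAct_rTensor_integralProj_coaction (counit (R := R) (A := H))
  rw [hP, LinearMap.rTensor_zero, LinearMap.zero_apply, map_zero] at this
  simpa using congr($this 1)

end FiniteProjective

end Semiring

section Field

variable {k H : Type*} [Field k] [Ring H] [HopfAlgebra k H] [FiniteDimensional k H]

lemma dualAct_injective {l : Module.Dual k H} (hl : IsLeftIntegral l) (hne : l ≠ 0) :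
    Function.Injective (dualAct l) := by
  intro a b hab
  obtain ⟨x, hx⟩ : ∃ x, l x ≠ 0 := by
    by_contra! hl0
    exact hne (LinearMap.ext hl0)
  have := congr(dualTensorHom k H H $(rTensor_integralProj_coaction_dualAct hl a) x)
  rw [hab, rTensor_integralProj_coaction_dualAct hl b] at this
  simpa [hx] using congr((l x)⁻¹ • $this).symm

lemma antipode_injective : Function.Injective (antipode k (A := H)) := by
  obtain ⟨l, hl, hne⟩ := exists_isLeftIntegral_ne_zero (R := k) (H := H)
  intro a b hab
  apply dualAct_injective hl hne
  ext x
  simp [hab]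

end Field

end HopfAlgebra

/-- The antipode of a finite-dimensional Hopf algebra `H` over a field `k`
is bijective. -/
theorem antipode_bijective_of_finiteDimensional
    (k : Type u) [Field k] (H : Type v) [Ring H] [HopfAlgebra k H] [FiniteDimensional k H] :
    Function.Bijective (HopfAlgebra.antipode (R := k) (A := H)) :=
  ⟨HopfAlgebra.antipode_injective,
    LinearMap.injective_iff_surjective.mp HopfAlgebra.antipode_injective⟩
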